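/- Let d ≥ 3 be an integer and let F, G be a maximal solution of the planar ODE system F' = −F² − G, G' = F(1 − d·G) with initial data satisfying G(0) < 1/d. Then the solution is defined for all t ≥ 0 and the functions F and G are bounded on [0, ∞). -/

import Mathlib

/-!
Along solutions with `1 - dG > 0` the quantity `radialEnergy d (F, G)` is conserved. For `d > 2`
each of its level sets in that half-plane is bounded and keeps a positive distance from the line
`1 - dG = 0`, because `2/d < 1`. So a solution of the field cut off outside a large box, which
exists for all time by Picard–Lindelöf, never reaches the region where the cut-off acts, and is
a bounded global solution of the original system.
-/

open Set Metric
open scoped NNReal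

section Prod

variable {E F : Type*} [NormedAddCommGroup E] [NormedSpace ℝ E] [NormedAddCommGroup F]
  [NormedSpace ℝ F] {f : ℝ → E × F} {f' : E × F} {t : ℝ}

theorem HasDerivAt.fst (h : HasDerivAt f f' t) : HasDerivAt (fun s => (f s).1) f'.1 t :=
  (ContinuousLinearMap.fst ℝ E F).hasFDerivAt.comp_hasDerivAt t h

theorem HasDerivAt.snd (h : HasDerivAt f f' t) : HasDerivAt (fun s => (f s).2) f'.2 t :=
  (ContinuousLinearMap.snd ℝ E F).hasFDerivAt.comp_hasDerivAt t h

end Prod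

section GlobalExistence

variable {E : Type*} [NormedAddCommGroup E] [NormedSpace ℝ E] [CompleteSpace E]
  {w : E → E} {K C : ℝ≥0}

theorem exists_forall_mem_Ioo_hasDerivAt_of_lipschitzWith (hK : LipschitzWith K w)
    (hC : ∀ x, ‖w x‖ ≤ C) (x₀ : E) (T : ℝ≥0) :
    ∃ γ : ℝ → E, γ 0 = x₀ ∧ ∀ t ∈ Ioo (-T : ℝ) T, HasDerivAt γ (w (γ t)) t := by
  have hPL : IsPicardLindelof (fun _ => w) (tmin := -T) (tmax := T) ⟨0, by simp⟩ x₀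
      (C * T) 0 C K :=
    .of_time_independent (fun x _ => hC x) hK.lipschitzOnWith (by simp)
  obtain ⟨γ, hγ0, hγ⟩ := hPL.exists_eq_forall_mem_Icc_hasDerivWithinAt₀
  exact ⟨γ, hγ0, fun t ht =>
    (hγ t (Ioo_subset_Icc_self ht)).hasDerivAt (Icc_mem_nhds ht.1 ht.2)⟩

theorem exists_forall_hasDerivAt_of_lipschitzWith (hK : LipschitzWith K w)
    (hC : ∀ x, ‖w x‖ ≤ C) (x₀ : E) :
    ∃ γ : ℝ → E, γ 0 = x₀ ∧ ∀ t, HasDerivAt γ (w (γ t)) t := by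
  choose γ hγ0 hγ using fun n : ℕ => exists_forall_mem_Ioo_hasDerivAt_of_lipschitzWith hK hC x₀ n
  simp only [NNReal.coe_natCast] at hγ
  have hmono {n m : ℕ} (h : n ≤ m) : Ioo (-n : ℝ) n ⊆ Ioo (-m : ℝ) m := by
    have : (n : ℝ) ≤ m := by exact_mod_cast h
    exact Ioo_subset_Ioo (neg_le_neg this) this
  have hcompat {n m : ℕ} (h : n ≤ m) : EqOn (γ n) (γ m) (Ioo (-n : ℝ) n) := fun s hs =>
    ODE_solution_unique_of_mem_Ioo (v := fun _ => w) (s := fun _ => univ)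
      (fun _ _ => hK.lipschitzOnWith) ⟨by linarith [hs.1, hs.2], by linarith [hs.1, hs.2]⟩
      (fun t ht => ⟨hγ n t ht, trivial⟩) (fun t ht => ⟨hγ m t (hmono h ht), trivial⟩)
      ((hγ0 n).trans (hγ0 m).symm) hs
  have hmem (s : ℝ) : s ∈ Ioo (-(⌈|s|⌉₊ + 1 : ℕ) : ℝ) (⌈|s|⌉₊ + 1 : ℕ) :=
    abs_lt.1 (by push_cast; linarith [Nat.le_ceil |s|])
  refine ⟨fun s => γ (⌈|s|⌉₊ + 1) s, by simpa using hγ0 1, fun t => ?_⟩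
  have hloc : (fun s => γ (⌈|s|⌉₊ + 1) s) =ᶠ[nhds t] γ (⌈|t|⌉₊ + 2) := by
    filter_upwards [Ioo_mem_nhds (hmem t).1 (hmem t).2] with s hs
    refine hcompat ?_ (hmem s)
    have := Nat.ceil_le.2 (abs_lt.2 hs).le
    omega
  exact ((hγ _ t (hmono (by omega) (hmem t))).congr_of_eventuallyEq hloc).congr_deriv
    (congrArg w hloc.eq_of_nhds.symm)

end GlobalExistence

theorem LocallyLipschitz.exists_lipschitzWith_bounded_eqOn_closedBall {F : Type*}
    [SeminormedAddCommGroup F] {v : ℝ × ℝ → F} (hv : LocallyLipschitz v) {R : ℝ} (hR : 0 ≤ R) :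
    ∃ (w : ℝ × ℝ → F) (K C : ℝ≥0), LipschitzWith K w ∧ (∀ p, ‖w p‖ ≤ C) ∧
      EqOn w v (closedBall 0 R) := by
  have hRR : -R ≤ R := by linarith
  set π : ℝ × ℝ → ℝ × ℝ := fun p => (projIcc (-R) R hRR p.1, projIcc (-R) R hRR p.2)
  have hπ : LipschitzWith 1 π := by
    simpa using ((LipschitzWith.subtype_val _).comp ((LipschitzWith.projIcc hRR).comp
      LipschitzWith.prod_fst)).prodMk
      ((LipschitzWith.subtype_val _).comp ((LipschitzWith.projIcc hRR).comp
        LipschitzWith.prod_snd))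
  have hmem {p : ℝ × ℝ} : p ∈ closedBall 0 R ↔ p.1 ∈ Icc (-R) R ∧ p.2 ∈ Icc (-R) R := by
    simp [Prod.norm_def, abs_le]
  have hπmaps : MapsTo π univ (closedBall 0 R) := fun p _ =>
    hmem.2 ⟨(projIcc (-R) R hRR p.1).2, (projIcc (-R) R hRR p.2).2⟩
  have hπid : EqOn π id (closedBall 0 R) := fun p hp => by
    simp [π, projIcc_of_mem hRR (hmem.1 hp).1, projIcc_of_mem hRR (hmem.1 hp).2]
  obtain ⟨K, hK⟩ := hv.locallyLipschitzOn.exists_lipschitzOnWith_of_compact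
    (isCompact_closedBall (0 : ℝ × ℝ) R)
  obtain ⟨C, hC⟩ := (isCompact_closedBall (0 : ℝ × ℝ) R).exists_bound_of_continuousOn
    hv.continuous.continuousOn
  refine ⟨v ∘ π, K * 1, C.toNNReal, lipschitzOnWith_univ.1 (hK.comp hπ.lipschitzOnWith hπmaps),
    fun p => (hC _ (hπmaps (mem_univ p))).trans (Real.le_coe_toNNReal C), fun p hp => ?_⟩
  simp [hπid hp]

theorem Continuous.forall_nonneg_mem_of_trapped {X : Type*} [TopologicalSpace X] {γ : ℝ → X}
    (hγ : Continuous γ) {S V : Set X} (hS : IsClosed S) (hV : IsOpen V) (hSV : S ⊆ V)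
    (h₀ : γ 0 ∈ S) (htrap : ∀ s ≥ 0, MapsTo γ (Icc 0 s) V → γ s ∈ S) :
    ∀ t ≥ 0, γ t ∈ S := by
  by_contra! ⟨t₁, ht₁, hS₁⟩
  set O := {t : ℝ | 0 ≤ t ∧ γ t ∉ V}
  have hO : O.Nonempty := by
    by_contra! hO
    exact hS₁ (htrap t₁ ht₁ fun u hu => by_contra fun h => hO.subset ⟨hu.1, h⟩)
  have hObdd : BddBelow O := ⟨0, fun _ h => h.1⟩
  -- `T` is the first exit time from `V`: before it `γ` lies in `S`, hence so does `γ T`, and then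
  -- `γ` stays in the neighbourhood `V` of `γ T` for a while after `T`.
  set T := sInf O
  have hT : 0 ≤ T := le_csInf hO fun _ h => h.1
  have hbefore : MapsTo γ (Ico 0 T) S := fun s hs =>
    htrap s hs.1 fun u hu => by_contra fun h => (csInf_le hObdd ⟨hu.1, h⟩).not_gt
      (hu.2.trans_lt hs.2)
  have hγT : γ T ∈ S := by
    rcases hT.eq_or_lt with h | h
    · rwa [← h]
    · rw [← hS.closure_eq]
      exact map_mem_closure hγ (by simp [closure_Ico h.ne, hT]) hbefore
  obtain ⟨δ, hδ, hball⟩ := Metric.eventually_nhds_iff.1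
    (hγ.continuousAt.preimage_mem_nhds (hV.mem_nhds (hSV hγT)))
  obtain ⟨o, hoO, ho⟩ := exists_lt_of_csInf_lt hO (lt_add_of_pos_right T hδ)
  exact hoO.2 (hball (by rw [Real.dist_eq, abs_lt]; constructor <;> linarith [csInf_le hObdd hoO]))

theorem exists_forall_nonneg_hasDerivAt_of_trapped {v : ℝ × ℝ → ℝ × ℝ} (hv : LocallyLipschitz v)
    {S V : Set (ℝ × ℝ)} (hS : IsClosed S) (hV : IsOpen V) (hVb : Bornology.IsBounded V)
    (hSV : S ⊆ V) {x₀ : ℝ × ℝ} (hx₀ : x₀ ∈ S)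
    (htrap : ∀ (γ : ℝ → ℝ × ℝ) (s : ℝ), 0 ≤ s → γ 0 = x₀ →
      (∀ t ∈ Icc 0 s, γ t ∈ V ∧ HasDerivAt γ (v (γ t)) t) → γ s ∈ S) :
    ∃ γ : ℝ → ℝ × ℝ, γ 0 = x₀ ∧ ∀ t ≥ 0, γ t ∈ S ∧ HasDerivAt γ (v (γ t)) t := by
  obtain ⟨R, hVR⟩ := hVb.subset_closedBall 0
  obtain ⟨w, K, C, hwK, hwC, hwv⟩ :=
    hv.exists_lipschitzWith_bounded_eqOn_closedBall (le_max_right R 0)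
  obtain ⟨γ, hγ₀, hγ⟩ := exists_forall_hasDerivAt_of_lipschitzWith hwK hwC x₀
  have hγv {t : ℝ} (ht : γ t ∈ V) : HasDerivAt γ (v (γ t)) t :=
    hwv (closedBall_subset_closedBall (le_max_left R 0) (hVR ht)) ▸ hγ t
  have hγS := Continuous.forall_nonneg_mem_of_trapped
    (continuous_iff_continuousAt.2 fun t => (hγ t).continuousAt) hS hV hSV (hγ₀ ▸ hx₀)
    fun s hs hmaps => htrap γ s hs hγ₀ fun t ht => ⟨hmaps ht, hγv (hmaps ht)⟩
  exact ⟨γ, hγ₀, fun t ht => ⟨hγS t ht, hγv (hSV (hγS t ht))⟩⟩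

def radialField (d : ℝ) (p : ℝ × ℝ) : ℝ × ℝ := (-p.1 ^ 2 - p.2, p.1 * (1 - d * p.2))

theorem contDiff_radialField (d : ℝ) : ContDiff ℝ 1 (radialField d) := by
  unfold radialField
  fun_prop

/-- The constant `C_d` of the first integral `F² = (2G - 1)/(d - 2) + C_d (1 - dG)^(2/d)`. -/
noncomputable def radialEnergy (d : ℝ) (p : ℝ × ℝ) : ℝ :=
  (1 - d * p.2) ^ (-(2 / d)) * (p.1 ^ 2 - (2 * p.2 - 1) / (d - 2))

theorem hasDerivAt_radialEnergy_comp {d : ℝ} (hd₀ : d ≠ 0) (hd₂ : d ≠ 2) {γ : ℝ → ℝ × ℝ}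
    {t : ℝ} (hγ : HasDerivAt γ (radialField d (γ t)) t) (hρ : 0 < 1 - d * (γ t).2) :
    HasDerivAt (fun s => radialEnergy d (γ s)) 0 t := by
  have hF := hγ.fst
  have hG := hγ.snd
  have hρ' := ((hG.const_mul d).const_sub 1).rpow_const (p := -(2 / d)) (Or.inl hρ.ne')
  have hrest := (hF.fun_pow 2).fun_sub (((hG.const_mul 2).sub_const 1).div_const (d - 2))
  refine (hρ'.mul hrest).congr_deriv ?_
  simp only [radialField]
  rw [Real.rpow_sub hρ, Real.rpow_one]
  have : d - 2 ≠ 0 := sub_ne_zero.2 hd₂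
  field_simp
  ring

theorem radialEnergy_comp_eq {d : ℝ} (hd₀ : d ≠ 0) (hd₂ : d ≠ 2) {γ : ℝ → ℝ × ℝ} {a b : ℝ}
    (hab : a ≤ b)
    (hγ : ∀ t ∈ Icc a b, HasDerivAt γ (radialField d (γ t)) t ∧ 0 < 1 - d * (γ t).2) :
    radialEnergy d (γ b) = radialEnergy d (γ a) := by
  have hE (t) (ht : t ∈ Icc a b) := hasDerivAt_radialEnergy_comp hd₀ hd₂ (hγ t ht).1 (hγ t ht).2
  exact constant_of_has_deriv_right_zero (fun t ht => (hE t ht).continuousAt.continuousWithinAt)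
    (fun t ht => (hE t (Ico_subset_Icc_self ht)).hasDerivWithinAt) b ⟨hab, le_rfl⟩

theorem radialEnergy_mul_rpow {d : ℝ} (hd : 2 < d) {p : ℝ × ℝ} (hρ : 0 < 1 - d * p.2) :
    radialEnergy d p * (1 - d * p.2) ^ (2 / d) =
      p.1 ^ 2 + 1 / d + 2 / (d * (d - 2)) * (1 - d * p.2) := by
  have : d - 2 ≠ 0 := by linarith
  have : d ≠ 0 := by linarith
  rw [radialEnergy, Real.rpow_neg hρ.le, mul_comm, ← mul_assoc,
    mul_inv_cancel₀ (by positivity), one_mul]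
  field_simp
  ring

theorem radialEnergy_pos {d : ℝ} (hd : 2 < d) {p : ℝ × ℝ} (hρ : 0 < 1 - d * p.2) :
    0 < radialEnergy d p := by
  have : 0 < d - 2 := by linarith
  have h := radialEnergy_mul_rpow hd hρ
  have : 0 < p.1 ^ 2 + 1 / d + 2 / (d * (d - 2)) * (1 - d * p.2) := by positivity
  exact pos_of_mul_pos_left (h ▸ this) (by positivity)

theorem exists_bounds_of_radialEnergy_eq {d : ℝ} (hd : 2 < d) (E₀ : ℝ) :
    ∃ ε > 0, ∃ B, ∀ p : ℝ × ℝ, 0 < 1 - d * p.2 → radialEnergy d p = E₀ →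
      ε ≤ 1 - d * p.2 ∧ p ∈ closedBall 0 B := by
  rcases le_or_gt E₀ 0 with hE₀ | hE₀
  · exact ⟨1, one_pos, 0, fun p hρ hE => absurd (hE ▸ radialEnergy_pos hd hρ) hE₀.not_gt⟩
  have hd₀ : 0 < d := by linarith
  have hd₂ : 0 < d - 2 := by linarith
  have hθ : 0 < 1 - 2 / d := by linarith [(div_lt_one hd₀).2 hd]
  set P := (d * (d - 2) / 2 * E₀) ^ (1 - 2 / d)⁻¹
  have hP : 0 ≤ P := by positivity
  refine ⟨(d * E₀)⁻¹ ^ (2 / d)⁻¹, by positivity, max √(E₀ * P ^ (2 / d)) ((1 + P) / d),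
    fun p hρ hE => ?_⟩
  have hsplit := radialEnergy_mul_rpow hd hρ
  rw [hE] at hsplit
  set ρ := 1 - d * p.2 with hρ_def
  set Y := ρ ^ (2 / d)
  have hY : 0 < Y := by positivity
  have hF := sq_nonneg p.1
  have hG : 0 < 2 / (d * (d - 2)) * ρ := by positivity
  have hd' : 0 < 1 / d := by positivity
  have hlow : (d * E₀)⁻¹ ≤ Y := by
    rw [mul_inv, ← one_div, ← div_eq_mul_inv, div_le_iff₀ hE₀]
    linarith
  have hup : ρ ^ (1 - 2 / d) ≤ d * (d - 2) / 2 * E₀ := by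
    rw [Real.rpow_sub hρ, Real.rpow_one, div_le_iff₀ hY]
    calc ρ = d * (d - 2) / 2 * (2 / (d * (d - 2)) * ρ) := by field_simp
      _ ≤ d * (d - 2) / 2 * (E₀ * Y) := mul_le_mul_of_nonneg_left (by linarith) (by positivity)
      _ = _ := by ring
  have hρP : ρ ≤ P :=
    calc ρ = (ρ ^ (1 - 2 / d)) ^ (1 - 2 / d)⁻¹ := (Real.rpow_rpow_inv hρ.le hθ.ne').symm
      _ ≤ P := Real.rpow_le_rpow (by positivity) hup (by positivity)
  refine ⟨?_, ?_⟩
  · calc (d * E₀)⁻¹ ^ (2 / d)⁻¹ ≤ Y ^ (2 / d)⁻¹ := by gcongr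
      _ = ρ := Real.rpow_rpow_inv hρ.le (by positivity)
  · rw [mem_closedBall_zero_iff, Prod.norm_def]
    refine max_le_max (Real.abs_le_sqrt ?_) ?_
    · calc p.1 ^ 2 ≤ E₀ * Y := by linarith
        _ ≤ E₀ * P ^ (2 / d) := by gcongr; exact Real.rpow_le_rpow hρ.le hρP (by positivity)
    · have hp₂ : p.2 = (1 - ρ) / d := by field_simp; linarith
      rw [Real.norm_eq_abs, hp₂, abs_div, abs_of_pos hd₀]
      gcongr
      rw [abs_le]
      constructor <;> linarith

/-- For the radially symmetric system `F' = −F² − G`, `G' = F(1 − dG)` in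
dimension `d ≥ 3` with initial data `G(0) < 1/d`, the (maximal) solution is
defined for all `t ≥ 0` and `F`, `G` are bounded on `[0, ∞)`. Since the
right-hand side is smooth, solutions are unique, so this is expressed as the
existence of a globally defined bounded solution with the given initial data. -/
theorem radial_global_bounded_d_ge_three (d : ℕ) (hd : 3 ≤ d) (F₀ G₀ : ℝ)
    (hG₀ : G₀ < 1 / (d : ℝ)) :
    ∃ F G : ℝ → ℝ, F 0 = F₀ ∧ G 0 = G₀ ∧
      (∀ t : ℝ, 0 ≤ t →
        HasDerivAt F (-(F t) ^ 2 - G t) t ∧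
        HasDerivAt G (F t * (1 - (d : ℝ) * G t)) t) ∧
      ∃ M : ℝ, ∀ t : ℝ, 0 ≤ t → |F t| ≤ M ∧ |G t| ≤ M := by
  have hd₂ : (2 : ℝ) < d := by exact_mod_cast hd
  have hρ₀ : 0 < 1 - (d : ℝ) * G₀ := by
    rw [lt_div_iff₀ (zero_lt_two.trans hd₂)] at hG₀; linarith
  obtain ⟨ε, hε, B, hbound⟩ := exists_bounds_of_radialEnergy_eq hd₂ (radialEnergy d (F₀, G₀))
  obtain ⟨γ, hγ₀, hγ⟩ := exists_forall_nonneg_hasDerivAt_of_trapped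
    (contDiff_radialField d).locallyLipschitz
    (S := {p | ε ≤ 1 - d * p.2} ∩ closedBall 0 B) (V := {p | 0 < 1 - d * p.2} ∩ ball 0 (B + 1))
    ((isClosed_le continuous_const (by fun_prop)).inter isClosed_closedBall)
    ((isOpen_lt continuous_const (by fun_prop)).inter isOpen_ball)
    (isBounded_ball.subset inter_subset_right)
    (fun p hp => ⟨hε.trans_le hp.1, closedBall_subset_ball (lt_add_one B) hp.2⟩)
    (hbound _ hρ₀ rfl)
    fun γ s hs hγ₀ hγ => hbound _ (hγ s ⟨hs, le_rfl⟩).1.1 <| by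
      rw [radialEnergy_comp_eq (zero_lt_two.trans hd₂).ne' hd₂.ne' hs
        fun t ht => ⟨(hγ t ht).2, (hγ t ht).1.1⟩, hγ₀]
  refine ⟨fun t => (γ t).1, fun t => (γ t).2, by simp [hγ₀], by simp [hγ₀],
    fun t ht => ⟨(hγ t ht).2.fst, (hγ t ht).2.snd⟩, B, fun t ht => ?_⟩
  have hB := mem_closedBall_zero_iff.1 (hγ t ht).1.2
  exact ⟨(norm_fst_le _).trans hB, (norm_snd_le _).trans hB⟩
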